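/- arXiv:2211.13951 — 6 statements merged into one kernel-verified Lean document; each statement's English description precedes it below -/
import Mathlib

section
/- Let b : Fin n → ℝ be nonnegative entitlements summing to 1, let c : Fin m → ℝ be non-increasing nonnegative disvalues, and fix an agent i. Then the proportional share (b i)·∑ⱼ c j is at most the anyprice share APS(c, b i), where APS(c, β) = max over price vectors p ≥ 0 with ∑ p j = 1 of the minimum of ∑_{j∈S} c j over subsets S with ∑_{j∈S} p j ≥ β. -/
/-- The anyprice share (APS) of an agent with additive disvaluation `c` over `m`
chores and responsibility `β`: the max over nonnegative price vectors summing to 1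
of the min over bundles of price at least `β` of the bundle's disvalue. -/
noncomputable def APS (m : ℕ) (c : Fin m → ℝ) (β : ℝ) : ℝ :=
  sSup {v : ℝ | ∃ p : Fin m → ℝ, (∀ j, 0 ≤ p j) ∧ (∑ j, p j) = 1 ∧
    v = sInf {w : ℝ | ∃ S : Finset (Fin m), β ≤ ∑ j ∈ S, p j ∧ w = ∑ j ∈ S, c j}}

/-- The proportional share of agent `i` is at most her anyprice share. -/
theorem stmt1 (n m : ℕ) (b : Fin n → ℝ) (c : Fin m → ℝ)
    (hb_nonneg : ∀ i, 0 ≤ b i) (hb_sum : ∑ i, b i = 1)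
    (hc_nonneg : ∀ j, 0 ≤ c j)
    (hc_mono : ∀ j k : Fin m, j ≤ k → c k ≤ c j)
    (hc_pos : 0 < ∑ j, c j)
    (i : Fin n) :
    b i * ∑ j, c j ≤ APS m c (b i) := by
  set β := b i with hβ
  set T := ∑ j, c j with hT
  have hβ1 : β ≤ 1 := by
    rw [← hb_sum]
    exact Finset.single_le_sum (fun j _ => hb_nonneg j) (Finset.mem_univ i)
  -- the proportional price vector
  set p : Fin m → ℝ := fun j => c j / T with hp
  have hpnn : ∀ j, 0 ≤ p j := fun j => div_nonneg (hc_nonneg j) hc_pos.le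
  have hpsum : (∑ j, p j) = 1 := by
    simp only [hp, ← Finset.sum_div]
    exact div_self hc_pos.ne'
  set W : Set ℝ := {w : ℝ | ∃ S : Finset (Fin m), β ≤ ∑ j ∈ S, p j ∧ w = ∑ j ∈ S, c j}
  have hWne : W.Nonempty := ⟨T, Finset.univ, by rw [hpsum]; exact hβ1, rfl⟩
  have hlb : β * T ≤ sInf W := by
    apply le_csInf hWne
    rintro w ⟨S, hS, rfl⟩
    have : ∑ j ∈ S, p j = (∑ j ∈ S, c j) / T := by
      simp [hp, Finset.sum_div]
    rw [this] at hS
    calc β * T ≤ ((∑ j ∈ S, c j) / T) * T := by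
          exact mul_le_mul_of_nonneg_right hS hc_pos.le
      _ = ∑ j ∈ S, c j := div_mul_cancel₀ _ hc_pos.ne'
  -- boundedness of the outer set
  have hbdd : BddAbove {v : ℝ | ∃ q : Fin m → ℝ, (∀ j, 0 ≤ q j) ∧ (∑ j, q j) = 1 ∧
      v = sInf {w : ℝ | ∃ S : Finset (Fin m), β ≤ ∑ j ∈ S, q j ∧ w = ∑ j ∈ S, c j}} := by
    refine ⟨T, ?_⟩
    rintro v ⟨q, hq, hqs, rfl⟩
    have hmem : T ∈ {w : ℝ | ∃ S : Finset (Fin m), β ≤ ∑ j ∈ S, q j ∧ w = ∑ j ∈ S, c j} :=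
      ⟨Finset.univ, by rw [hqs]; exact hβ1, rfl⟩
    have hbb : BddBelow {w : ℝ | ∃ S : Finset (Fin m), β ≤ ∑ j ∈ S, q j ∧ w = ∑ j ∈ S, c j} := by
      refine ⟨0, ?_⟩
      rintro w ⟨S, _, rfl⟩
      exact Finset.sum_nonneg fun j _ => hc_nonneg j
    exact csInf_le hbb hmem
  have hmem : sInf W ∈ {v : ℝ | ∃ q : Fin m → ℝ, (∀ j, 0 ≤ q j) ∧ (∑ j, q j) = 1 ∧
      v = sInf {w : ℝ | ∃ S : Finset (Fin m), β ≤ ∑ j ∈ S, q j ∧ w = ∑ j ∈ S, c j}} :=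
    ⟨p, hpnn, hpsum, rfl⟩
  calc β * T ≤ sInf W := hlb
    _ ≤ APS m c β := le_csSup hbdd hmem
end

section
/- Let c : Fin m → ℝ be non-increasing nonnegative disvalues, β ∈ (0,1), and k = ⌊1/β⌋ with k < m. Then c (k-1) + c k ≤ APS(c,β) (0-indexed: the sum of the k-th and (k+1)-st largest disvalues is at most the anyprice share), i.e., the chore share is at most the APS. -/
/-- With `k = ⌊1/β⌋`, the sum of the `k`-th and `(k+1)`-st largest disvalues
is at most the anyprice share. -/
theorem stmt2 (m : ℕ) (c : Fin m → ℝ) (β : ℝ)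
    (hc_nonneg : ∀ j, 0 ≤ c j)
    (hc_mono : ∀ j k : Fin m, j ≤ k → c k ≤ c j)
    (hβ0 : 0 < β) (hβ1 : β < 1)
    (k : ℕ) (hk : k = ⌊1 / β⌋₊) (hkm : k < m) :
    c ⟨k - 1, by omega⟩ + c ⟨k, hkm⟩ ≤ APS m c β := by
  have hk1 : 1 ≤ k := by
    rw [hk]
    refine Nat.le_floor ?_
    rw [Nat.cast_one, le_div_iff₀ hβ0]; linarith
  have hk0 : (0 : ℝ) < (k : ℝ) + 1 := by positivity
  -- β > 1/(k+1)
  have hβk : 1 / ((k : ℝ) + 1) < β := by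
    have h1 : (1 : ℝ) / β < (k : ℝ) + 1 := by
      rw [hk]; exact Nat.lt_floor_add_one _
    rw [div_lt_iff₀ hβ0] at h1
    rw [div_lt_iff₀ hk0]
    nlinarith
  set p : Fin m → ℝ := fun j => if (j : ℕ) ≤ k then 1 / ((k : ℝ) + 1) else 0 with hp
  have hpnn : ∀ j, 0 ≤ p j := by
    intro j; simp only [hp]; split <;> positivity
  have hsumS : ∀ S : Finset (Fin m), ∑ j ∈ S, p j
      = (S.filter fun j : Fin m => (j : ℕ) ≤ k).card * (1 / ((k : ℝ) + 1)) := by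
    intro S
    simp only [hp]
    rw [Finset.sum_ite, Finset.sum_const_zero, add_zero, Finset.sum_const, nsmul_eq_mul]
  have hcard : (Finset.univ.filter fun j : Fin m => (j : ℕ) ≤ k).card = k + 1 := by
    have : (Finset.univ.filter fun j : Fin m => (j : ℕ) ≤ k) = Finset.Iic ⟨k, hkm⟩ := by
      ext j; simp [Fin.le_def]
    rw [this, Fin.card_Iic]
  have hpsum : ∑ j, p j = 1 := by
    rw [hsumS, hcard]
    push_cast
    field_simp
  set t : ℝ := c ⟨k - 1, by omega⟩ + c ⟨k, hkm⟩ with ht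
  set W : Set ℝ := {w : ℝ | ∃ S : Finset (Fin m), β ≤ ∑ j ∈ S, p j ∧ w = ∑ j ∈ S, c j}
    with hW
  -- every element of W is at least t
  have hWlb : ∀ w ∈ W, t ≤ w := by
    rintro w ⟨S, hS, rfl⟩
    set T := S.filter fun j : Fin m => (j : ℕ) ≤ k with hT
    have hTcard : 1 < T.card := by
      rw [hsumS S, ← hT] at hS
      have h2 := hβk.trans_le hS
      rw [div_lt_iff₀ hk0] at h2
      have h3 : (1 : ℝ) < T.card := by
        have he : (T.card : ℝ) * (1 / ((k : ℝ) + 1)) * ((k : ℝ) + 1) = T.card := by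
          field_simp
        rwa [he] at h2
      exact_mod_cast h3
    have main : ∀ a b : Fin m, a ∈ T → b ∈ T → a < b → t ≤ ∑ j ∈ S, c j := by
      intro a b haT hbT hab
      have haS : a ∈ S := Finset.mem_of_mem_filter a haT
      have hbS : b ∈ S := Finset.mem_of_mem_filter b hbT
      have hak : (a : ℕ) ≤ k := (Finset.mem_filter.mp haT).2
      have hbk : (b : ℕ) ≤ k := (Finset.mem_filter.mp hbT).2
      have hab' : (a : ℕ) < (b : ℕ) := hab
      have h1 : c ⟨k - 1, by omega⟩ ≤ c a := hc_mono a ⟨k - 1, by omega⟩ (by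
        simp only [Fin.le_def]; omega)
      have h2 : c ⟨k, hkm⟩ ≤ c b := hc_mono b ⟨k, hkm⟩ (by
        simp only [Fin.le_def]; omega)
      have hsub : ({a, b} : Finset (Fin m)) ⊆ S := by
        intro x hx
        rcases Finset.mem_insert.mp hx with rfl | hx
        · exact haS
        · rw [Finset.mem_singleton.mp hx]; exact hbS
      have hpair : ∑ j ∈ ({a, b} : Finset (Fin m)), c j = c a + c b :=
        Finset.sum_pair hab.ne
      have hle : ∑ j ∈ ({a, b} : Finset (Fin m)), c j ≤ ∑ j ∈ S, c j :=
        Finset.sum_le_sum_of_subset_of_nonneg hsub (fun j _ _ => hc_nonneg j)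
      rw [hpair] at hle
      calc t ≤ c a + c b := add_le_add h1 h2
        _ ≤ ∑ j ∈ S, c j := hle
    obtain ⟨a, ha, b, hb, hab⟩ := Finset.one_lt_card.mp hTcard
    rcases lt_or_gt_of_ne hab with hlt | hgt
    · exact main a b ha hb hlt
    · exact main b a hb ha hgt
  have hWne : W.Nonempty := ⟨∑ j, c j, Finset.univ, by rw [hpsum]; exact hβ1.le, rfl⟩
  have htInf : t ≤ sInf W := le_csInf hWne hWlb
  -- the APS set
  set V : Set ℝ := {v : ℝ | ∃ q : Fin m → ℝ, (∀ j, 0 ≤ q j) ∧ (∑ j, q j) = 1 ∧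
    v = sInf {w : ℝ | ∃ S : Finset (Fin m), β ≤ ∑ j ∈ S, q j ∧ w = ∑ j ∈ S, c j}} with hV
  have hmem : sInf W ∈ V := ⟨p, hpnn, hpsum, rfl⟩
  have hbdd : BddAbove V := by
    refine ⟨∑ j, c j, ?_⟩
    rintro v ⟨q, hqnn, hqsum, rfl⟩
    apply csInf_le
    · refine ⟨0, ?_⟩
      rintro w ⟨S, _, rfl⟩
      exact Finset.sum_nonneg fun j _ => hc_nonneg j
    · exact ⟨Finset.univ, by rw [hqsum]; exact hβ1.le, rfl⟩
  calc c ⟨k - 1, by omega⟩ + c ⟨k, hkm⟩ = t := ht.symm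
    _ ≤ sInf W := htInf
    _ ≤ APS m c β := le_csSup hbdd hmem
end

section
/- Let ρ ≥ 3/2. Then the function f(ρ) = (ρ-1)·ln(ρ/(ρ-1)) + 2ρ - 3 + 2(ρ-1)·ln(ρ/(2(ρ-1))) is strictly increasing in ρ on [3/2, 2], f(3/2) < 1, and f(1.53) > 1. Hence the equation f(ρ) = 1 has a unique solution in (3/2, 1.53). -/
/-!
With `g_c(x) = (x - 1) log (x / (c (x - 1)))` one has `g_c' = log (x / (c (x - 1))) - 1/x`, so
`f' = log (ρ/(ρ-1)) + 2 log (ρ/(2(ρ-1))) + (2 - 3/ρ)`: on `[3/2, 2]` the first term is positive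
and the other two are nonnegative. `f(3/2) = (3/2) log 3 - log 2 < 1` amounts to `27/4 < e²`.
Since `153/53 = 2 · (153/106)` and `(153/106)² = 2 · (23409/22472)`,
`f(1.53) = (53/40) log 2 + (159/200) log (23409/22472) + 3/50`, which exceeds `1` by
`log 2 > 0.6931` and `log x ≥ 1 - 1/x`. Uniqueness of the root follows from the intermediate
value theorem and strict monotonicity.
-/

open Real Set

lemma hasDerivAt_sub_one_mul_log_div {c x : ℝ} (hc : c ≠ 0) (hx : 1 < x) :
    HasDerivAt (fun y => (y - 1) * log (y / (c * (y - 1))))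
      (log (x / (c * (x - 1))) - x⁻¹) x := by
  have hx0 : x ≠ 0 := by positivity
  have hx1 : x - 1 ≠ 0 := sub_ne_zero.mpr hx.ne'
  have hsub : HasDerivAt (fun y : ℝ => y - 1) 1 x := (hasDerivAt_id x).sub_const 1
  have hquot := (hasDerivAt_id' x).fun_div (hsub.const_mul c) (mul_ne_zero hc hx1)
  have hlog := hquot.log (div_ne_zero hx0 (mul_ne_zero hc hx1))
  refine (hsub.fun_mul hlog).congr_deriv ?_
  rw [one_mul, sub_eq_add_neg (log _)]
  congr 1
  field_simp
  ring

theorem existsUnique_mem_Ioo_eq_of_strictMonoOn {α δ : Type*}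
    [ConditionallyCompleteLinearOrder α] [TopologicalSpace α] [OrderTopology α] [DenselyOrdered α]
    [LinearOrder δ] [TopologicalSpace δ] [OrderClosedTopology δ]
    {f : α → δ} {a b : α} {y : δ} (hab : a ≤ b) (hmono : StrictMonoOn f (Icc a b))
    (hcont : ContinuousOn f (Icc a b)) (ha : f a < y) (hb : y < f b) :
    ∃! x, x ∈ Ioo a b ∧ f x = y := by
  obtain ⟨x, hx, hfx⟩ := intermediate_value_Ioo hab hcont ⟨ha, hb⟩
  refine ⟨x, ⟨hx, hfx⟩, fun x' ⟨hx', hfx'⟩ => ?_⟩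
  exact hmono.injOn (Ioo_subset_Icc_self hx') (Ioo_subset_Icc_self hx) (hfx'.trans hfx.symm)

noncomputable def coveringFn (ρ : ℝ) : ℝ :=
  (ρ - 1) * log (ρ / (ρ - 1)) + 2 * ρ - 3 + 2 * (ρ - 1) * log (ρ / (2 * (ρ - 1)))

lemma hasDerivAt_coveringFn {x : ℝ} (hx : 1 < x) :
    HasDerivAt coveringFn (log (x / (x - 1)) + 2 * log (x / (2 * (x - 1))) + 2 - 3 / x) x := by
  have h1 := hasDerivAt_sub_one_mul_log_div one_ne_zero hx
  have h2 := hasDerivAt_sub_one_mul_log_div two_ne_zero hx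
  simp only [one_mul] at h1
  have hsum := ((h1.add ((hasDerivAt_id' x).const_mul 2)).sub_const 3).add (h2.const_mul 2)
  have hfun : coveringFn = fun y => (y - 1) * log (y / (y - 1)) + 2 * y - 3
      + 2 * ((y - 1) * log (y / (2 * (y - 1)))) := by
    funext y
    unfold coveringFn
    ring
  rw [hfun]
  exact hsum.congr_deriv (by ring)

lemma continuousOn_coveringFn : ContinuousOn coveringFn (Ioi 1) :=
  fun _ hx => (hasDerivAt_coveringFn hx).continuousAt.continuousWithinAt

lemma strictMonoOn_coveringFn : StrictMonoOn coveringFn (Icc (3 / 2) 2) := by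
  refine strictMonoOn_of_deriv_pos (convex_Icc _ _)
    (continuousOn_coveringFn.mono ((Icc_subset_Ioi_iff (by norm_num)).2 (by norm_num)))
    fun x hx => ?_
  rw [interior_Icc] at hx
  obtain ⟨hlo, hhi⟩ := hx
  rw [(hasDerivAt_coveringFn (by linarith)).deriv]
  have h1 : 0 < log (x / (x - 1)) := log_pos ((one_lt_div (by linarith)).2 (by linarith))
  have h2 : 0 ≤ log (x / (2 * (x - 1))) := log_nonneg ((one_le_div (by linarith)).2 (by linarith))
  have h3 : 3 / x ≤ 2 := (div_le_iff₀ (by linarith)).2 (by linarith)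
  linarith

lemma coveringFn_three_halves_lt_one : coveringFn (3 / 2) < 1 := by
  have hval : coveringFn (3 / 2) = 3 / 2 * log 3 - log 2 := by
    unfold coveringFn
    norm_num
    rw [log_div (by norm_num) (by norm_num)]
    ring
  have hexp : (27 / 4 : ℝ) < exp 2 := by
    rw [show (2 : ℝ) = 1 + 1 by norm_num, exp_add]
    nlinarith [exp_one_gt_d9]
  have hlog : log (27 / 4) = 3 * log 3 - 2 * log 2 := by
    rw [log_div (by norm_num) (by norm_num), show (27 : ℝ) = 3 ^ 3 by norm_num,
      show (4 : ℝ) = 2 ^ 2 by norm_num, log_pow, log_pow]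
    push_cast
    ring
  have := (log_lt_iff_lt_exp (by norm_num)).2 hexp
  linarith

lemma one_lt_coveringFn_153 : 1 < coveringFn 1.53 := by
  have hval : coveringFn 1.53 = 0.53 * log (153 / 53) + 0.06 + 1.06 * log (153 / 106) := by
    unfold coveringFn
    norm_num
    ring
  have hsplit : log (153 / 53) = log 2 + log (153 / 106) := by
    rw [← log_mul (by norm_num) (by norm_num)]
    norm_num
  have hsq : 2 * log (153 / 106) = log 2 + log (23409 / 22472) := by
    rw [two_mul, ← log_mul (by norm_num) (by norm_num), ← log_mul (by norm_num) (by norm_num)]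
    norm_num
  have hsmall : 937 / 23409 ≤ log (23409 / 22472) := by
    have := one_sub_inv_le_log_of_pos (show (0 : ℝ) < 23409 / 22472 by norm_num)
    norm_num at this
    linarith
  linarith [log_two_gt_d9]

/-- The fractional-covering feasibility function
`f(ρ) = (ρ-1)·ln(ρ/(ρ-1)) + 2ρ - 3 + 2(ρ-1)·ln(ρ/(2(ρ-1)))`
is strictly increasing on `[3/2, 2]`, satisfies `f(3/2) < 1` and `f(1.53) > 1`,
and hence `f(ρ) = 1` has a unique solution in `(3/2, 1.53)`. -/
theorem stmt7 (f : ℝ → ℝ)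
    (hf : ∀ ρ, f ρ = (ρ - 1) * Real.log (ρ / (ρ - 1)) + 2 * ρ - 3
          + 2 * (ρ - 1) * Real.log (ρ / (2 * (ρ - 1)))) :
    StrictMonoOn f (Set.Icc (3/2 : ℝ) 2) ∧ f (3/2) < 1 ∧ 1 < f 1.53 ∧
    ∃! ρ : ℝ, ρ ∈ Set.Ioo (3/2 : ℝ) 1.53 ∧ f ρ = 1 := by
  obtain rfl : f = coveringFn := funext hf
  have hsub : Icc (3 / 2 : ℝ) 1.53 ⊆ Icc (3 / 2) 2 := Icc_subset_Icc_right (by norm_num)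
  refine ⟨strictMonoOn_coveringFn, coveringFn_three_halves_lt_one, one_lt_coveringFn_153, ?_⟩
  exact existsUnique_mem_Ioo_eq_of_strictMonoOn (by norm_num) (strictMonoOn_coveringFn.mono hsub)
    (continuousOn_coveringFn.mono ((Icc_subset_Ioi_iff (by norm_num)).2 (by norm_num)))
    coveringFn_three_halves_lt_one one_lt_coveringFn_153
end

section
/- Consider n agents with equal entitlement 1/n, and let agent i, of entitlement 1/n, face 2n+1 chores each of disvalue n/(2n+1). Define the chore share as the maximum of the proportional share, the largest single disvalue, and the sum of the n-th and (n+1)-st largest disvalues. Then the chore share of agent i equals 1: the proportional share is (1/n)·(2n+1)·(n/(2n+1)) = 1, the largest single disvalue is n/(2n+1) ≤ 1, and the sum of two disvalues is 2n/(2n+1) ≤ 1. Meanwhile the MMS of agent i equals 3n/(2n+1). -/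
/-- With `2n+1` chores each of disvalue `n/(2n+1)` and `n` agents of equal
entitlement `1/n`, the chore share of an agent equals `1` while her MMS
equals `3n/(2n+1)`. -/
theorem stmt9 (n : ℕ) (hn : 1 ≤ n) (c : Fin (2 * n + 1) → ℝ)
    (hc : ∀ j, c j = (n : ℝ) / (2 * n + 1)) :
    max ((1 / (n : ℝ)) * ∑ j, c j)
      (max (c ⟨0, by omega⟩) (c ⟨n - 1, by omega⟩ + c ⟨n, by omega⟩)) = 1 ∧
    sInf {v : ℝ | ∃ A : Fin (2 * n + 1) → Fin n,
        v = ⨆ i : Fin n, ∑ j ∈ Finset.univ.filter (fun j => A j = i), c j}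
      = 3 * n / (2 * n + 1) := by
  have hnR : (0:ℝ) < n := by exact_mod_cast hn
  have hd : (0:ℝ) < 2 * n + 1 := by positivity
  set v : ℝ := (n : ℝ) / (2 * n + 1) with hv
  have hvpos : 0 < v := by positivity
  haveI : Nonempty (Fin n) := Fin.pos_iff_nonempty.mp hn
  have sumfib : ∀ (A : Fin (2*n+1) → Fin n) (i : Fin n),
      ∑ j ∈ Finset.univ.filter (fun j => A j = i), c j
        = ((Finset.univ.filter (fun j => A j = i)).card : ℝ) * v := by
    intro A i
    rw [Finset.sum_congr rfl (fun j _ => hc j), Finset.sum_const, nsmul_eq_mul]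
  -- Part 1
  have part1 : max ((1 / (n : ℝ)) * ∑ j, c j)
      (max (c ⟨0, by omega⟩) (c ⟨n - 1, by omega⟩ + c ⟨n, by omega⟩)) = 1 := by
    have h1 : (1 / (n : ℝ)) * ∑ j, c j = 1 := by
      rw [Finset.sum_congr rfl (fun j _ => hc j), Finset.sum_const, nsmul_eq_mul]
      simp only [Finset.card_univ, Fintype.card_fin]
      rw [hv]
      push_cast
      field_simp
    have h2 : c ⟨0, by omega⟩ ≤ 1 := by
      rw [hc, div_le_one hd]; linarith
    have h3 : c ⟨n - 1, by omega⟩ + c ⟨n, by omega⟩ ≤ 1 := by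
      rw [hc, hc, ← add_div, div_le_one hd]; linarith
    rw [h1, max_eq_left (max_le h2 h3)]
  refine ⟨part1, ?_⟩
  -- Part 2
  set S : Set ℝ := {x : ℝ | ∃ A : Fin (2 * n + 1) → Fin n,
      x = ⨆ i : Fin n, ∑ j ∈ Finset.univ.filter (fun j => A j = i), c j} with hS
  have lb : ∀ x ∈ S, 3 * v ≤ x := by
    rintro x ⟨A, rfl⟩
    obtain ⟨i, -, hi⟩ := Finset.exists_lt_card_fiber_of_mul_lt_card_of_maps_to
      (s := (Finset.univ : Finset (Fin (2*n+1)))) (t := (Finset.univ : Finset (Fin n)))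
      (f := A) (n := 2) (fun a _ => Finset.mem_univ _)
      (by simp only [Finset.card_univ, Fintype.card_fin]; omega)
    refine le_trans ?_ (le_ciSup (Set.finite_range _).bddAbove i)
    rw [sumfib]
    have : (3:ℝ) ≤ ((Finset.univ.filter (fun j => A j = i)).card : ℝ) := by
      exact_mod_cast hi
    nlinarith
  -- the witness assignment
  have A0 : Fin (2*n+1) → Fin n := fun j => ⟨min (j.val / 2) (n-1), by
    have := Nat.min_le_right (j.val / 2) (n-1); omega⟩
  set A₀ : Fin (2*n+1) → Fin n := fun j => ⟨min (j.val / 2) (n-1), by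
    have := Nat.min_le_right (j.val / 2) (n-1); omega⟩ with hA0
  have hcard : ∀ i : Fin n, (Finset.univ.filter (fun j => A₀ j = i)).card ≤ 3 := by
    intro i
    have hsub : ∀ j ∈ Finset.univ.filter (fun j => A₀ j = i),
        (j : ℕ) ∈ ({2*i.val, 2*i.val+1, 2*i.val+2} : Finset ℕ) := by
      intro j hj
      simp only [Finset.mem_filter, Finset.mem_univ, true_and, hA0] at hj
      have hj' : min (j.val / 2) (n-1) = i.val := congrArg Fin.val hj
      have hjlt := j.isLt
      have hilt := i.isLt
      simp only [Finset.mem_insert, Finset.mem_singleton]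
      omega
    calc (Finset.univ.filter (fun j => A₀ j = i)).card
        ≤ ({2*i.val, 2*i.val+1, 2*i.val+2} : Finset ℕ).card :=
          Finset.card_le_card_of_injOn (fun j => (j : ℕ)) hsub
            (fun a _ b _ h => Fin.ext h)
      _ ≤ 3 := by
          refine le_trans (Finset.card_insert_le _ _) ?_
          refine Nat.succ_le_succ (le_trans (Finset.card_insert_le _ _) ?_)
          simp
  have hx0 : (⨆ i : Fin n, ∑ j ∈ Finset.univ.filter (fun j => A₀ j = i), c j) = 3 * v := by
    refine le_antisymm ?_ (lb _ ⟨A₀, rfl⟩)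
    refine ciSup_le fun i => ?_
    rw [sumfib]
    have : ((Finset.univ.filter (fun j => A₀ j = i)).card : ℝ) ≤ 3 := by
      exact_mod_cast hcard i
    nlinarith
  have hmem : 3 * v ∈ S := ⟨A₀, hx0.symm⟩
  have h3v : 3 * v = 3 * n / (2 * n + 1) := by rw [hv]; ring
  rw [← h3v]
  exact le_antisymm (csInf_le ⟨3 * v, lb⟩ hmem) (le_csInf ⟨3 * v, hmem⟩ lb)
end

section
/- Consider a picking order for n agents where some agent picks three items among the first 2n rounds. If there are exactly 2n chores each of disvalue 1/2 (and all other chores have disvalue 0), then the MMS of the agent equals 1 (two chores per bundle), while the agent receives a bundle of disvalue at least 3/2, giving approximation ratio at least 3/2. -/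
/-- If in a picking order an agent gets three of the first `2n` chores, and
there are exactly `2n` chores of disvalue `1/2` (the rest of disvalue 0), then
her MMS is 1 while her bundle has disvalue at least `3/2`. -/
theorem stmt12 (n m : ℕ) (hn : 1 ≤ n) (hm : 2 * n ≤ m)
    (c : Fin m → ℝ) (hc : ∀ j : Fin m, c j = if (j : ℕ) < 2 * n then 1/2 else 0)
    (π : Fin m → Fin n) (a : Fin n) (r₁ r₂ r₃ : Fin m)
    (h12 : r₁ ≠ r₂) (h13 : r₁ ≠ r₃) (h23 : r₂ ≠ r₃)
    (hr₁ : (r₁ : ℕ) < 2 * n) (hr₂ : (r₂ : ℕ) < 2 * n) (hr₃ : (r₃ : ℕ) < 2 * n)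
    (ha₁ : π r₁ = a) (ha₂ : π r₂ = a) (ha₃ : π r₃ = a) :
    sInf {v : ℝ | ∃ A : Fin m → Fin n,
        v = ⨆ i : Fin n, ∑ j ∈ Finset.univ.filter (fun j => A j = i), c j} = 1 ∧
    3 / 2 ≤ ∑ j ∈ Finset.univ.filter (fun j => π j = a), c j := by
  have hn0 : 0 < n := hn
  have hne : Nonempty (Fin n) := ⟨⟨0, hn0⟩⟩
  -- total disvalue is n
  have hcsum : ∑ j : Fin m, c j = n := by
    have h1 : ∑ j : Fin m, c j = ∑ j ∈ Finset.range m, (if j < 2*n then (1:ℝ)/2 else 0) := by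
      rw [← Fin.sum_univ_eq_sum_range]
      exact Finset.sum_congr rfl fun j _ => hc j
    have hfil : (Finset.range m).filter (fun j => j < 2*n) = Finset.range (2*n) := by
      ext j; simp; omega
    rw [h1, Finset.sum_ite, Finset.sum_const, Finset.sum_const, hfil]
    simp
    ring
  have hc_nonneg : ∀ j : Fin m, 0 ≤ c j := by
    intro j; rw [hc j]; positivity
  -- every member of the set is ≥ 1
  have key_lb : ∀ v ∈ {v : ℝ | ∃ A : Fin m → Fin n,
      v = ⨆ i : Fin n, ∑ j ∈ Finset.univ.filter (fun j => A j = i), c j}, (1:ℝ) ≤ v := by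
    rintro v ⟨A, rfl⟩
    have hsum : ∑ i : Fin n, ∑ j ∈ Finset.univ.filter (fun j => A j = i), c j
        = ∑ j : Fin m, c j := Finset.sum_fiberwise _ _ _
    obtain ⟨i, hi⟩ : ∃ i : Fin n, (1:ℝ) ≤ ∑ j ∈ Finset.univ.filter (fun j => A j = i), c j := by
      by_contra h
      push_neg at h
      have hlt : ∑ i : Fin n, ∑ j ∈ Finset.univ.filter (fun j => A j = i), c j
          < ∑ _i : Fin n, (1:ℝ) :=
        Finset.sum_lt_sum_of_nonempty Finset.univ_nonempty fun i _ => h i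
      rw [hsum, hcsum] at hlt
      simp at hlt
    exact hi.trans (le_ciSup (f := fun i : Fin n =>
      ∑ j ∈ Finset.univ.filter (fun j => A j = i), c j) (Finite.bddAbove_range _) i)
  -- a witness partition: chore j goes to bundle (j/2) % n
  set A : Fin m → Fin n := fun j => ⟨(j : ℕ) / 2 % n, Nat.mod_lt _ hn0⟩ with hA
  have hmem : (⨆ i : Fin n, ∑ j ∈ Finset.univ.filter (fun j => A j = i), c j)
      ∈ {v : ℝ | ∃ A : Fin m → Fin n,
        v = ⨆ i : Fin n, ∑ j ∈ Finset.univ.filter (fun j => A j = i), c j} := ⟨A, rfl⟩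
  have hub : (⨆ i : Fin n, ∑ j ∈ Finset.univ.filter (fun j => A j = i), c j) ≤ 1 := by
    apply ciSup_le
    intro i
    have h1 : ∑ j ∈ Finset.univ.filter (fun j => A j = i), c j
        = ∑ j ∈ Finset.univ.filter (fun j => A j = i ∧ (j : ℕ) < 2*n), (1:ℝ)/2 :=
      calc ∑ j ∈ Finset.univ.filter (fun j => A j = i), c j
          = ∑ j ∈ Finset.univ.filter (fun j => A j = i),
              (if (j : ℕ) < 2*n then (1:ℝ)/2 else 0) :=
            Finset.sum_congr rfl fun j _ => hc j
        _ = ∑ j ∈ (Finset.univ.filter (fun j => A j = i)).filter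
              (fun j : Fin m => (j : ℕ) < 2*n), (1:ℝ)/2 := (Finset.sum_filter _ _).symm
        _ = ∑ j ∈ Finset.univ.filter (fun j => A j = i ∧ (j : ℕ) < 2*n), (1:ℝ)/2 := by
            rw [Finset.filter_filter]
    rw [h1]
    have hi0 : 2 * (i : ℕ) < m := by have := i.2; omega
    have hi1 : 2 * (i : ℕ) + 1 < m := by have := i.2; omega
    have hsub : Finset.univ.filter (fun j : Fin m => A j = i ∧ (j : ℕ) < 2*n)
        ⊆ {⟨2 * i, hi0⟩, ⟨2 * i + 1, hi1⟩} := by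
      intro j hj
      simp only [Finset.mem_filter, Finset.mem_univ, true_and] at hj
      obtain ⟨hji, hjlt⟩ := hj
      have h2 : (j : ℕ) / 2 % n = i := congrArg Fin.val hji
      have h3 : (j : ℕ) / 2 < n := by omega
      rw [Nat.mod_eq_of_lt h3] at h2
      simp only [Finset.mem_insert, Finset.mem_singleton]
      have : (j : ℕ) = 2 * i ∨ (j : ℕ) = 2 * i + 1 := by omega
      rcases this with h | h
      · left; exact Fin.ext h
      · right; exact Fin.ext h
    calc ∑ j ∈ Finset.univ.filter (fun j : Fin m => A j = i ∧ (j : ℕ) < 2*n), (1:ℝ)/2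
        ≤ ∑ _j ∈ ({⟨2 * i, hi0⟩, ⟨2 * i + 1, hi1⟩} : Finset (Fin m)), (1:ℝ)/2 :=
          Finset.sum_le_sum_of_subset_of_nonneg hsub (fun _ _ _ => by norm_num)
      _ ≤ 1 := by
          rw [Finset.sum_const, nsmul_eq_mul]
          have hcard : ({⟨2 * i, hi0⟩, ⟨2 * i + 1, hi1⟩} : Finset (Fin m)).card ≤ 2 := by
            exact le_trans (Finset.card_insert_le _ _) (by simp)
          have h2 : (({⟨2 * i, hi0⟩, ⟨2 * i + 1, hi1⟩} : Finset (Fin m)).card : ℝ) ≤ 2 := by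
            exact_mod_cast hcard
          linarith
  constructor
  · exact le_antisymm ((csInf_le ⟨1, key_lb⟩ hmem).trans hub)
      (le_csInf ⟨_, hmem⟩ key_lb)
  · have hsub : ({r₁, r₂, r₃} : Finset (Fin m)) ⊆ Finset.univ.filter (fun j => π j = a) := by
      intro j hj
      simp only [Finset.mem_insert, Finset.mem_singleton] at hj
      simp only [Finset.mem_filter, Finset.mem_univ, true_and]
      rcases hj with rfl | rfl | rfl <;> assumption
    have h3 : ∑ j ∈ ({r₁, r₂, r₃} : Finset (Fin m)), c j = 3/2 := by
      rw [Finset.sum_insert (by simp [h12, h13]), Finset.sum_insert (by simp [h23]),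
        Finset.sum_singleton, hc r₁, hc r₂, hc r₃]
      rw [if_pos hr₁, if_pos hr₂, if_pos hr₃]
      norm_num
    calc (3:ℝ)/2 = ∑ j ∈ ({r₁, r₂, r₃} : Finset (Fin m)), c j := h3.symm
      _ ≤ ∑ j ∈ Finset.univ.filter (fun j => π j = a), c j :=
          Finset.sum_le_sum_of_subset_of_nonneg hsub (fun j _ _ => hc_nonneg j)
end

section
/- Let n ≥ 3, k = n - 2, m = k·n + 1. Consider a disvaluation c on m chores where one chore has disvalue k and each of the other k·n chores has disvalue 1, and an agent with entitlement (k+1)/m. Then the agent's APS is at most k + 2: for every nonnegative price vector p summing to m (equivalently, normalized to sum 1 with budget (k+1)/m), there exists a bundle S with p(S) ≥ k+1 and c(S) ≤ k + 2. -/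
/-- Among any finset `U` there is a `t`-element subset whose sum is at least the
`t/|U|` fraction of the total sum (the "top `t` elements"). -/
lemma top_subset_sum {α : Type*} [DecidableEq α] (U : Finset α) (f : α → ℝ) (t : ℕ)
    (ht : t ≤ U.card) :
    ∃ T ⊆ U, T.card = t ∧ (t : ℝ) * ∑ x ∈ U, f x ≤ (U.card : ℝ) * ∑ x ∈ T, f x := by
  obtain ⟨T0, hT0U, hT0card⟩ := Finset.exists_subset_card_eq ht
  have hne : (U.powersetCard t).Nonempty := ⟨T0, Finset.mem_powersetCard.2 ⟨hT0U, hT0card⟩⟩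
  obtain ⟨T, hTmem, hTmax⟩ := Finset.exists_max_image (U.powersetCard t) (fun T => ∑ x ∈ T, f x) hne
  obtain ⟨hTU, hTcard⟩ := Finset.mem_powersetCard.1 hTmem
  refine ⟨T, hTU, hTcard, ?_⟩
  -- each element outside T has value ≤ each element inside T
  have key : ∀ x ∈ U \ T, ∀ y ∈ T, f x ≤ f y := by
    intro x hx y hy
    rw [Finset.mem_sdiff] at hx
    by_contra hlt
    push_neg at hlt
    have hxy : x ≠ y := by rintro rfl; exact hx.2 hy
    set T' := insert x (T.erase y) with hT'
    have hT'mem : T' ∈ U.powersetCard t := by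
      rw [Finset.mem_powersetCard]
      constructor
      · intro z hz
        rcases Finset.mem_insert.1 hz with rfl | hz
        · exact hx.1
        · exact hTU (Finset.mem_of_mem_erase hz)
      · rw [Finset.card_insert_of_notMem (by
          intro h; exact hx.2 (Finset.mem_of_mem_erase h)),
          Finset.card_erase_of_mem hy]
        have : 1 ≤ T.card := Finset.card_pos.2 ⟨y, hy⟩
        omega
    have hsum : ∑ x ∈ T, f x < ∑ z ∈ T', f z := by
      rw [hT', Finset.sum_insert (by intro h; exact hx.2 (Finset.mem_of_mem_erase h)),
        Finset.sum_erase_eq_sub hy]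
      linarith
    exact absurd (hTmax T' hT'mem) (by linarith)
  -- hence the sum outside is bounded
  have hout : ∀ x ∈ U \ T, (t : ℝ) * f x ≤ ∑ y ∈ T, f y := by
    intro x hx
    calc (t : ℝ) * f x = ∑ _y ∈ T, f x := by rw [Finset.sum_const, hTcard, nsmul_eq_mul]
      _ ≤ ∑ y ∈ T, f y := Finset.sum_le_sum (fun y hy => key x hx y hy)
  have hsumout : (t : ℝ) * ∑ x ∈ U \ T, f x ≤ ((U.card - t : ℕ) : ℝ) * ∑ y ∈ T, f y := by
    rw [Finset.mul_sum]
    calc ∑ x ∈ U \ T, (t : ℝ) * f x ≤ ∑ _x ∈ U \ T, ∑ y ∈ T, f y :=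
          Finset.sum_le_sum hout
      _ = ((U.card - t : ℕ) : ℝ) * ∑ y ∈ T, f y := by
          rw [Finset.sum_const, Finset.card_sdiff_of_subset hTU, hTcard, nsmul_eq_mul]
  have hsplit : ∑ x ∈ U, f x = ∑ x ∈ T, f x + ∑ x ∈ U \ T, f x := by
    rw [add_comm, Finset.sum_sdiff hTU]
  have hcast : ((U.card - t : ℕ) : ℝ) = (U.card : ℝ) - t := by
    have := Nat.cast_sub ht (R := ℝ); exact this
  have h2 : (t : ℝ) * ∑ x ∈ U \ T, f x ≤ ((U.card : ℝ) - t) * ∑ y ∈ T, f y := by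
    rw [← hcast]; exact hsumout
  rw [hsplit]
  nlinarith [h2]

/-- APS upper bound example: with `k = n - 2`, `m = kn + 1` chores, one chore of
disvalue `k` (chore 0) and the rest of disvalue 1, for every nonnegative price
vector summing to `m` there is a bundle of price at least `k+1` and disvalue at
most `k+2`. Hence the APS of an agent with entitlement `(k+1)/m` is at most `k+2`. -/
theorem stmt18 (n k m : ℕ) (hn : 3 ≤ n) (hk : k = n - 2) (hm : m = k * n + 1)
    (c : Fin m → ℝ)
    (hc0 : c ⟨0, by omega⟩ = k) (hc1 : ∀ j : Fin m, (j : ℕ) ≠ 0 → c j = 1)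
    (p : Fin m → ℝ) (hp_nonneg : ∀ j, 0 ≤ p j) (hp_sum : ∑ j, p j = m) :
    ∃ S : Finset (Fin m), ((k : ℝ) + 1) ≤ ∑ j ∈ S, p j ∧ ∑ j ∈ S, c j ≤ k + 2 := by
  set z : Fin m := ⟨0, by omega⟩ with hz
  by_cases hbig : (k : ℝ) + 1 ≤ p z
  · refine ⟨{z}, ?_, ?_⟩
    · simpa using hbig
    · simp [hc0]
  · push_neg at hbig
    set U : Finset (Fin m) := Finset.univ.erase z with hU
    have hUcard : U.card = k * n := by
      rw [hU, Finset.card_erase_of_mem (Finset.mem_univ z), Finset.card_univ, Fintype.card_fin]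
      omega
    have hkn : 1 ≤ k := by omega
    have htle : k + 2 ≤ U.card := by rw [hUcard]; nlinarith
    obtain ⟨T, hTU, hTcard, hTsum⟩ := top_subset_sum U p (k + 2) htle
    have hUsum : ∑ x ∈ U, p x = (m : ℝ) - p z := by
      rw [hU, Finset.sum_erase_eq_sub (Finset.mem_univ z), hp_sum]
    refine ⟨T, ?_, ?_⟩
    · -- price bound
      have hknpos : (0 : ℝ) < (k : ℝ) * n := by positivity
      rw [hUcard, hUsum] at hTsum
      push_cast at hTsum
      have hm' : (m : ℝ) = (k : ℝ) * n + 1 := by push_cast [hm]; ring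
      have hn' : (n : ℝ) = (k : ℝ) + 2 := by
        have : n = k + 2 := by omega
        push_cast [this]; ring
      nlinarith [hTsum, hbig, hknpos]
    · -- disvalue bound
      have : ∑ j ∈ T, c j = ∑ _j ∈ T, (1 : ℝ) := by
        apply Finset.sum_congr rfl
        intro j hj
        have hjz : j ≠ z := (Finset.mem_erase.1 (hTU hj)).1
        have : (j : ℕ) ≠ 0 := by
          intro h0
          apply hjz
          exact Fin.ext h0
        rw [hc1 j this]
      rw [this, Finset.sum_const, hTcard, nsmul_eq_mul]
      push_cast
      linarith
end
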